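/- Let A_1, ..., A_m be non-negative matrices that define bounded operators on ℓ², and for i = 1, ..., m set P_i = A_i^{(m)} A_{i+1}^{(m)} ⋯ A_m^{(m)} A_1^{(m)} A_2^{(m)} ⋯ A_{i-1}^{(m)} (the cyclic product of the Hadamard m-th powers starting at index i). Then w((A_1 ∘ ⋯ ∘ A_m)^m) ≤ w(P_1^{(1/m)} ∘ ⋯ ∘ P_m^{(1/m)}) ≤ (w(P_1) ⋯ w(P_m))^{1/m} ≤ (w((A_1 A_2 ⋯ A_m)^{(m)}) · w((A_2 ⋯ A_m A_1)^{(m)}) ⋯ w((A_m A_1 ⋯ A_{m-1})^{(m)}))^{1/m}. -/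

import Mathlib

open scoped ENNReal NNReal BigOperators InnerProductSpace

noncomputable section

/-- The sequence space `ℓ^p(ℕ)` (real scalars). -/
abbrev lpSeq (p : ℝ≥0∞) := lp (fun _ : ℕ => ℝ) p

/-- The (infinite) non-negative matrix `a` defines the bounded operator `T` on `ℓ^p`:
for every `x ∈ ℓ^p` and every row index `i`, the series `∑_j a i j * x j` converges,
with sum equal to `(T x) i`. -/
def Represents (p : ℝ≥0∞) [Fact (1 ≤ p)] (a : ℕ → ℕ → ℝ)
    (T : lpSeq p →L[ℝ] lpSeq p) : Prop :=
  ∀ x : lpSeq p, ∀ i : ℕ, HasSum (fun j => a i j * x j) (T x i)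

/-- Hadamard (entrywise) product of two matrices. -/
def hadamard (a b : ℕ → ℕ → ℝ) : ℕ → ℕ → ℝ := fun i j => a i j * b i j

/-- Hadamard (entrywise) power `a^{(t)}`. -/
def hadPow (a : ℕ → ℕ → ℝ) (t : ℝ) : ℕ → ℕ → ℝ := fun i j => a i j ^ t

/-- Hadamard product of a finite family of matrices. -/
def hadProd {m : ℕ} (A : Fin m → ℕ → ℕ → ℝ) : ℕ → ℕ → ℝ := fun i j => ∏ k, A k i j

/-- Matrix product of two infinite matrices. -/
def matMul (a b : ℕ → ℕ → ℝ) : ℕ → ℕ → ℝ := fun i j => ∑' k, a i k * b k j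

/-- The identity matrix. -/
def idMat : ℕ → ℕ → ℝ := fun i j => if i = j then 1 else 0

/-- Product of a list of matrices. -/
def matListProd : List (ℕ → ℕ → ℝ) → ℕ → ℕ → ℝ
  | [] => idMat
  | a :: l => matMul a (matListProd l)

/-- Transposed matrix. -/
def transp (a : ℕ → ℕ → ℝ) : ℕ → ℕ → ℝ := fun i j => a j i

/-- The cyclic matrix product `A_i A_{i+1} ⋯ A_m A_1 ⋯ A_{i-1}` starting at index `i`. -/
def cycMatProd {m : ℕ} (A : Fin m → ℕ → ℕ → ℝ) (i : Fin m) : ℕ → ℕ → ℝ :=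
  matListProd (List.ofFn fun k : Fin m => A (i + k))

/-- The cyclic operator product `T_i T_{i+1} ⋯ T_m T_1 ⋯ T_{i-1}` starting at index `i`
(operator multiplication is composition). -/
def cycOpProd {m : ℕ} {p : ℝ≥0∞} [Fact (1 ≤ p)]
    (T : Fin m → lpSeq p →L[ℝ] lpSeq p) (i : Fin m) : lpSeq p →L[ℝ] lpSeq p :=
  (List.ofFn fun k : Fin m => T (i + k)).prod

/-- The numerical radius of a bounded operator on `ℓ²`:
`w(T) = sup { |⟨T f, f⟩| : ‖f‖ = 1 }`. -/
def numRadius (T : lpSeq 2 →L[ℝ] lpSeq 2) : ℝ :=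
  sSup { r : ℝ | ∃ f : lpSeq 2, ‖f‖ = 1 ∧ r = |⟪T f, f⟫_ℝ| }

/-!
All matrices are non-negative, so everything can be compared entrywise after passing to
`ℝ≥0∞`-valued matrices, where infinite sums commute and need no summability side conditions.
The numerical radius is monotone in the matrix: `|⟪T f, f⟫| ≤ ⟪T |f|, |f|⟫`, and the right-hand
side only grows with the entries. The three inequalities thus reduce to entrywise facts.
Hölder's inequality over the summation index, applied once per factor while the cyclic index
shifts by one, gives `(A₁ ∘ ⋯ ∘ A_m)^m ≤ P₁^{(1/m)} ∘ ⋯ ∘ P_m^{(1/m)}`. Hölder over pairs of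
indices gives `⟪Q |f|, |f|⟫ ≤ ∏ ⟪P_i |f|, |f|⟫^{1/m}`. Finally `∑ xᵏ ≤ (∑ x)ᵏ` along every path
gives `P_i ≤ (A_i ⋯ A_{i-1})^{(m)}`. The Hadamard-type matrices define bounded operators by
domination: entries are bounded by operator norms, and geometric means by arithmetic means.
-/

section LpAbs

variable {p : ℝ≥0∞}

def lpAbs (x : lpSeq p) : lpSeq p := ⟨fun i => |x i|, (lp.memℓp x).mono' fun i => by simp⟩

@[simp] lemma lpAbs_apply (x : lpSeq p) (i : ℕ) : lpAbs x i = |x i| := rfl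

lemma norm_lpAbs [Fact (1 ≤ p)] (x : lpSeq p) : ‖lpAbs x‖ = ‖x‖ := by
  have hp : p ≠ 0 := (zero_lt_one.trans_le Fact.out).ne'
  exact le_antisymm (lp.norm_mono hp fun i => by simp) (lp.norm_mono hp fun i => by simp)

end LpAbs

lemma hasSum_of_tsum_ofReal_eq {f : ℕ → ℝ} (hf : ∀ j, 0 ≤ f j) {c : ℝ} (hc : 0 ≤ c)
    (h : ∑' j, ENNReal.ofReal (f j) = ENNReal.ofReal c) : HasSum f c := by
  have hsum := ENNReal.hasSum_toReal (h ▸ ENNReal.ofReal_ne_top)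
  rwa [← ENNReal.tsum_toReal_eq fun _ => ENNReal.ofReal_ne_top, h, ENNReal.toReal_ofReal hc,
    funext fun j => ENNReal.toReal_ofReal (hf j)] at hsum

/-- Infinite matrices with entries in `ℝ≥0∞`. The pointwise (`Pi`) algebra on them is the
Hadamard algebra; the matrix product is `EMat.mul`. -/
abbrev EMat := ℕ → ℕ → ℝ≥0∞

namespace EMat

def ofReal (a : ℕ → ℕ → ℝ) : EMat := fun i j => ENNReal.ofReal (a i j)

def mul (M N : EMat) : EMat := fun i j => ∑' k, M i k * N k j

def one : EMat := fun i j => if i = j then 1 else 0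

def listProd : List EMat → EMat
  | [] => one
  | M :: l => mul M (listProd l)

def mulVec (M : EMat) (v : ℕ → ℝ≥0∞) : ℕ → ℝ≥0∞ := fun i => ∑' j, M i j * v j

def quadForm (M : EMat) (v : ℕ → ℝ≥0∞) : ℝ≥0∞ := ∑' ij : ℕ × ℕ, M ij.1 ij.2 * (v ij.1 * v ij.2)

lemma ofReal_idMat : ofReal idMat = one := by
  funext i j
  by_cases hij : i = j <;> simp [ofReal, one, idMat, hij]

lemma mulVec_mul (M N : EMat) (v : ℕ → ℝ≥0∞) : mulVec (mul M N) v = mulVec M (mulVec N v) := by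
  funext i
  simp only [mulVec, mul, ← ENNReal.tsum_mul_right, ← ENNReal.tsum_mul_left, mul_assoc]
  exact ENNReal.tsum_comm

lemma quadForm_eq_tsum_mulVec (M : EMat) (v : ℕ → ℝ≥0∞) :
    quadForm M v = ∑' i, mulVec M v i * v i := by
  rw [quadForm, ENNReal.tsum_prod (f := fun i j => M i j * (v i * v j))]
  simp only [mulVec, ← ENNReal.tsum_mul_right]
  exact tsum_congr fun i => tsum_congr fun j => by ring

end EMat

lemma ENNReal.tsum_pow_le_tsum_pow {α : Type*} (x : α → ℝ≥0∞) {k : ℕ} (hk : 0 < k) :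
    ∑' a, x a ^ k ≤ (∑' a, x a) ^ k := by
  obtain ⟨n, rfl⟩ := Nat.exists_eq_add_one_of_ne_zero hk.ne'
  calc ∑' a, x a ^ (n + 1) ≤ ∑' a, (∑' b, x b) ^ n * x a :=
        ENNReal.tsum_le_tsum fun a => by
          rw [pow_succ]; exact mul_le_mul_left (pow_le_pow_left' (ENNReal.le_tsum a) n) _
    _ = (∑' a, x a) ^ (n + 1) := by rw [ENNReal.tsum_mul_left, pow_succ]

lemma ENNReal.tsum_prod_rpow_le {α ι : Type*} (s : Finset ι) (f : ι → α → ℝ≥0∞) {w : ι → ℝ}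
    (hw : ∑ i ∈ s, w i = 1) (hw0 : ∀ i ∈ s, 0 ≤ w i) :
    ∑' a, ∏ i ∈ s, f i a ^ w i ≤ ∏ i ∈ s, (∑' a, f i a) ^ w i := by
  let _ : MeasurableSpace α := ⊤
  have _ : MeasurableSingletonClass α := ⟨fun _ => trivial⟩
  simpa [MeasureTheory.lintegral_count] using ENNReal.lintegral_prod_norm_pow_le
    (μ := (MeasureTheory.Measure.count : MeasureTheory.Measure α)) s
    (fun _ _ => measurable_from_top.aemeasurable) hw hw0

namespace EMat

lemma listProd_map_pow_le {k : ℕ} (hk : 0 < k) (L : List EMat) :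
    listProd (L.map (· ^ k)) ≤ listProd L ^ k := by
  induction L with
  | nil =>
    intro i j
    by_cases hij : i = j <;> simp [listProd, one, hij, hk.ne']
  | cons M L ih =>
    intro i j
    calc ∑' l, M i l ^ k * listProd (L.map (· ^ k)) l j ≤ ∑' l, (M i l * listProd L l j) ^ k :=
          ENNReal.tsum_le_tsum fun l => by rw [mul_pow]; exact mul_le_mul_right (ih l j) _
      _ ≤ (∑' l, M i l * listProd L l j) ^ k := ENNReal.tsum_pow_le_tsum_pow _ hk

section Cyclic

variable {m : ℕ} [NeZero m]

open Fin.NatCast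

/-- `B t ^ m * B (t + 1) ^ m * ⋯` with `r` factors, indices modulo `m`. -/
def cycPowProd (B : Fin m → EMat) (t : Fin m) (r : ℕ) : EMat :=
  listProd (List.ofFn fun s : Fin r => B (t + ((s : ℕ) : Fin m)) ^ m)

lemma cycPowProd_succ (B : Fin m → EMat) (t : Fin m) (r : ℕ) :
    cycPowProd B t (r + 1) = mul (B t ^ m) (cycPowProd B (t + 1) r) := by
  simp only [cycPowProd, List.ofFn_succ, Fin.val_zero, Nat.cast_zero, add_zero, Fin.val_succ,
    Nat.cast_add, Nat.cast_one, add_assoc, add_comm (1 : Fin m)]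
  rfl

lemma cycPowProd_self (B : Fin m → EMat) (t : Fin m) :
    cycPowProd B t m = listProd (List.ofFn fun k : Fin m => B (t + k) ^ m) := by
  simp only [cycPowProd, Fin.cast_val_eq_self]

lemma listProd_replicate_prod_le (B : Fin m → EMat) (r : ℕ) :
    listProd (List.replicate r (∏ t, B t)) ≤ ∏ t, cycPowProd B t r ^ (1 / m : ℝ) := by
  have hm : (m : ℝ) ≠ 0 := Nat.cast_ne_zero.2 (NeZero.ne m)
  have hroot : ∀ x : ℝ≥0∞, (x ^ m) ^ (1 / m : ℝ) = x := fun x => by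
    rw [← ENNReal.rpow_natCast, ← ENNReal.rpow_mul, mul_one_div_cancel hm, ENNReal.rpow_one]
  induction r with
  | zero =>
    intro i j
    by_cases hij : i = j <;> simp [cycPowProd, listProd, one, hij]
  | succ r ih =>
    intro i j
    simp only [List.replicate_succ, listProd, mul, Finset.prod_apply, Pi.pow_apply]
    calc ∑' l, (∏ t, B t i l) * listProd (List.replicate r (∏ t, B t)) l j
        ≤ ∑' l, (∏ t, B t i l) * ∏ t, cycPowProd B (t + 1) r l j ^ (1 / m : ℝ) :=
          ENNReal.tsum_le_tsum fun l => by
            refine mul_le_mul_right ((ih l j).trans_eq ?_) _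
            simp only [Finset.prod_apply, Pi.pow_apply]
            exact (Equiv.prod_comp (Equiv.addRight 1) fun t => cycPowProd B t r l j ^ _).symm
      _ = ∑' l, ∏ t, (B t i l ^ m * cycPowProd B (t + 1) r l j) ^ (1 / m : ℝ) :=
          tsum_congr fun l => by
            simp only [ENNReal.mul_rpow_of_nonneg _ _ (by positivity : (0 : ℝ) ≤ 1 / m), hroot,
              Finset.prod_mul_distrib]
      _ ≤ ∏ t, (∑' l, B t i l ^ m * cycPowProd B (t + 1) r l j) ^ (1 / m : ℝ) :=
          ENNReal.tsum_prod_rpow_le _ _ (by simp) fun _ _ => by positivity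
      _ = ∏ t, cycPowProd B t (r + 1) i j ^ (1 / m : ℝ) := by simp only [cycPowProd_succ]; rfl

lemma quadForm_prod_rpow_le (N : Fin m → EMat) (v : ℕ → ℝ≥0∞) :
    quadForm (∏ t, N t ^ (1 / m : ℝ)) v ≤ ∏ t, quadForm (N t) v ^ (1 / m : ℝ) := by
  have hm : (m : ℝ) ≠ 0 := Nat.cast_ne_zero.2 (NeZero.ne m)
  have hpow : ∀ x : ℝ≥0∞, (x ^ (1 / m : ℝ)) ^ m = x := fun x => by
    rw [← ENNReal.rpow_natCast, ← ENNReal.rpow_mul, one_div_mul_cancel hm, ENNReal.rpow_one]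
  calc quadForm (∏ t, N t ^ (1 / m : ℝ)) v
      = ∑' ij : ℕ × ℕ, ∏ t, (N t ij.1 ij.2 * (v ij.1 * v ij.2)) ^ (1 / m : ℝ) :=
        tsum_congr fun ij => by
          simp only [ENNReal.mul_rpow_of_nonneg _ _ (by positivity : (0 : ℝ) ≤ 1 / m),
            Finset.prod_mul_distrib, Finset.prod_const, Finset.card_univ, Fintype.card_fin, hpow,
            Finset.prod_apply, Pi.pow_apply]
    _ ≤ ∏ t, quadForm (N t) v ^ (1 / m : ℝ) :=
        ENNReal.tsum_prod_rpow_le _ _ (by simp) fun _ _ => by positivity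

end Cyclic

end EMat

namespace Represents

variable {p : ℝ≥0∞} [Fact (1 ≤ p)] {a b c : ℕ → ℕ → ℝ} {Ta : lpSeq p →L[ℝ] lpSeq p}

lemma apply_single (h : Represents p a Ta) (i j : ℕ) : Ta (lp.single p j 1) i = a i j := by
  refine (h _ i).unique ?_
  convert hasSum_single j fun k hk => ?_ using 1
  · simp
  · simp [hk]

lemma abs_le_opNorm (h : Represents p a Ta) (i j : ℕ) : |a i j| ≤ ‖Ta‖ := by
  have hp : 0 < p := zero_lt_one.trans_le Fact.out
  set e : lpSeq p := lp.single p j 1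
  have he : ‖e‖ = 1 := by simp [e, lp.norm_single hp]
  calc |a i j| = ‖Ta e i‖ := by rw [h.apply_single, Real.norm_eq_abs]
    _ ≤ ‖Ta e‖ := lp.norm_apply_le_norm hp.ne' _ i
    _ ≤ ‖Ta‖ * ‖e‖ := Ta.le_opNorm _
    _ = ‖Ta‖ := by rw [he, mul_one]

lemma apply_nonneg (ha : ∀ i j, 0 ≤ a i j) (h : Represents p a Ta) {x : lpSeq p}
    (hx : ∀ j, 0 ≤ x j) (i : ℕ) : 0 ≤ Ta x i :=
  (h x i).nonneg fun j => mul_nonneg (ha i j) (hx j)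

lemma abs_apply_le (ha : ∀ i j, 0 ≤ a i j) (h : Represents p a Ta) (x : lpSeq p) (i : ℕ) :
    |Ta x i| ≤ Ta (lpAbs x) i := by
  rw [← (h x i).tsum_eq, ← Real.norm_eq_abs]
  exact tsum_of_norm_bounded (h (lpAbs x) i) fun j => by simp [abs_of_nonneg (ha i j)]

lemma of_nonneg (h : ∀ x : lpSeq p, (∀ j, 0 ≤ x j) → ∀ i, HasSum (fun j => a i j * x j) (Ta x i)) :
    Represents p a Ta := by
  intro x i
  -- `x = (|x| + x) - |x|` is a difference of non-negative vectors.
  have hpos : ∀ j, 0 ≤ (lpAbs x + x) j := fun j => by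
    simpa [← neg_le_iff_add_nonneg'] using neg_abs_le (x j)
  have := (h _ hpos i).sub (h (lpAbs x) (fun j => abs_nonneg (x j)) i)
  simpa [← mul_sub] using this

lemma smul (h : Represents p a Ta) (r : ℝ) : Represents p (fun i j => r * a i j) (r • Ta) := by
  intro x i
  simpa [mul_assoc] using (h x i).mul_left r

lemma finset_sum {ι : Type*} (s : Finset ι) {a : ι → ℕ → ℕ → ℝ} {T : ι → lpSeq p →L[ℝ] lpSeq p}
    (h : ∀ k ∈ s, Represents p (a k) (T k)) :
    Represents p (fun i j => ∑ k ∈ s, a k i j) (∑ k ∈ s, T k) := by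
  intro x i
  have happ : (∑ k ∈ s, T k) x i = ∑ k ∈ s, T k x i := by
    rw [FunLike.coe_sum, Finset.sum_apply, lp.coeFn_sum, Finset.sum_apply]
  rw [happ]
  simpa only [Finset.sum_mul] using hasSum_sum fun k hk => h k hk x i

lemma idMat : Represents p idMat 1 := by
  intro x i
  convert hasSum_single i fun j hj => ?_ using 1
  · simp [_root_.idMat]
  · simp [_root_.idMat, Ne.symm hj]

lemma exists_of_le {C : lpSeq p →L[ℝ] lpSeq p} (hb : ∀ i j, 0 ≤ b i j)
    (hbc : ∀ i j, b i j ≤ c i j) (hC : Represents p c C) :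
    ∃ B : lpSeq p →L[ℝ] lpSeq p, Represents p b B := by
  have hp : p ≠ 0 := (zero_lt_one.trans_le Fact.out).ne'
  have hdom : ∀ (x : lpSeq p) i j, ‖b i j * x j‖ ≤ c i j * lpAbs x j := fun x i j => by
    rw [norm_mul, Real.norm_of_nonneg (hb i j), lpAbs_apply, ← Real.norm_eq_abs]
    exact mul_le_mul_of_nonneg_right (hbc i j) (norm_nonneg _)
  have hsum : ∀ (x : lpSeq p) i, Summable fun j => b i j * x j := fun x i =>
    (hC (lpAbs x) i).summable.of_norm_bounded (hdom x i)
  have hrow : ∀ (x : lpSeq p) i, ‖∑' j, b i j * x j‖ ≤ C (lpAbs x) i := fun x i =>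
    tsum_of_norm_bounded (hC (lpAbs x) i) (hdom x i)
  let B : lpSeq p →ₗ[ℝ] lpSeq p :=
    { toFun := fun x => ⟨fun i => ∑' j, b i j * x j, (lp.memℓp (C (lpAbs x))).mono (hrow x)⟩
      map_add' := fun x y => lp.ext <| funext fun i => by
        simp [mul_add, (hsum x i).tsum_add (hsum y i)]
        rfl
      map_smul' := fun r x => lp.ext <| funext fun i => by
        simp [mul_left_comm _ r, tsum_mul_left] }
  refine ⟨B.mkContinuous ‖C‖ fun x => ?_, fun x i => (hsum x i).hasSum⟩
  calc ‖B x‖ ≤ ‖C (lpAbs x)‖ := lp.norm_mono hp fun i => (hrow x i).trans (Real.le_norm_self _)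
    _ ≤ ‖C‖ * ‖x‖ := by simpa [norm_lpAbs] using C.le_opNorm (lpAbs x)

lemma mulVec_ofReal (ha : ∀ i j, 0 ≤ a i j) (h : Represents p a Ta) {x : lpSeq p}
    (hx : ∀ j, 0 ≤ x j) :
    EMat.mulVec (EMat.ofReal a) (fun j => ENNReal.ofReal (x j)) =
      fun i => ENNReal.ofReal (Ta x i) := by
  funext i
  simp only [EMat.mulVec, EMat.ofReal, ← ENNReal.ofReal_mul (ha i _)]
  rw [← ENNReal.ofReal_tsum_of_nonneg (fun j => mul_nonneg (ha i j) (hx j)) (h x i).summable,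
    (h x i).tsum_eq]

end Represents

section MatMul

variable {p : ℝ≥0∞} [Fact (1 ≤ p)] {a b : ℕ → ℕ → ℝ} {Ta Tb : lpSeq p →L[ℝ] lpSeq p}

lemma EMat.ofReal_matMul (ha : ∀ i j, 0 ≤ a i j) (hb : ∀ i j, 0 ≤ b i j) (hTa : Represents p a Ta)
    (hTb : Represents p b Tb) :
    EMat.ofReal (matMul a b) = EMat.mul (EMat.ofReal a) (EMat.ofReal b) := by
  funext i j
  have hcol := hTa (Tb (lp.single p j 1)) i
  simp only [hTb.apply_single] at hcol
  simp only [EMat.ofReal, EMat.mul, matMul, ← ENNReal.ofReal_mul (ha i _)]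
  exact ENNReal.ofReal_tsum_of_nonneg (fun k => mul_nonneg (ha i k) (hb k j)) hcol.summable

lemma Represents.matMul (ha : ∀ i j, 0 ≤ a i j) (hb : ∀ i j, 0 ≤ b i j) (hTa : Represents p a Ta)
    (hTb : Represents p b Tb) : Represents p (matMul a b) (Ta * Tb) := by
  have hab : ∀ i j, 0 ≤ _root_.matMul a b i j := fun i j =>
    tsum_nonneg fun k => mul_nonneg (ha i k) (hb k j)
  refine Represents.of_nonneg fun x hx i => hasSum_of_tsum_ofReal_eq
    (fun j => mul_nonneg (hab i j) (hx j)) (hTa.apply_nonneg ha (hTb.apply_nonneg hb hx) i) ?_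
  have h := congrFun
    (EMat.mulVec_mul (EMat.ofReal a) (EMat.ofReal b) fun j => ENNReal.ofReal (x j)) i
  rw [← EMat.ofReal_matMul ha hb hTa hTb, hTb.mulVec_ofReal hb hx,
    hTa.mulVec_ofReal ha (hTb.apply_nonneg hb hx)] at h
  simp only [EMat.mulVec, EMat.ofReal] at h
  exact (tsum_congr fun j => ENNReal.ofReal_mul (hab i j)).trans h

end MatMul

lemma matListProd_nonneg {l : List (ℕ → ℕ → ℝ)} (h : ∀ a ∈ l, ∀ i j, 0 ≤ a i j) (i j : ℕ) :
    0 ≤ matListProd l i j := by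
  induction l generalizing i j with
  | nil => by_cases hij : i = j <;> simp [matListProd, idMat, hij]
  | cons a l ih =>
    simp only [List.forall_mem_cons] at h
    exact tsum_nonneg fun k => mul_nonneg (h.1 i k) (ih h.2 k j)

lemma cycMatProd_nonneg {m : ℕ} {A : Fin m → ℕ → ℕ → ℝ} (hA : ∀ k i j, 0 ≤ A k i j)
    (t : Fin m) (i j : ℕ) : 0 ≤ cycMatProd A t i j :=
  matListProd_nonneg (List.forall_mem_ofFn_iff.2 fun k => hA (t + k)) i j

section MatListProd

variable {p : ℝ≥0∞} [Fact (1 ≤ p)]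

lemma Represents.matListProd_ofFn {n : ℕ} {a : Fin n → ℕ → ℕ → ℝ}
    {T : Fin n → lpSeq p →L[ℝ] lpSeq p} (ha : ∀ k i j, 0 ≤ a k i j)
    (h : ∀ k, Represents p (a k) (T k)) :
    Represents p (matListProd (List.ofFn a)) (List.ofFn T).prod := by
  induction n with
  | zero => simpa [matListProd] using Represents.idMat
  | succ n ih =>
    rw [List.ofFn_succ, List.ofFn_succ, List.prod_cons]
    exact (h 0).matMul (ha 0) (matListProd_nonneg (List.forall_mem_ofFn_iff.2 fun k => ha k.succ))
      (ih (fun k => ha k.succ) fun k => h k.succ)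

lemma EMat.ofReal_matListProd_ofFn {n : ℕ} {a : Fin n → ℕ → ℕ → ℝ}
    {T : Fin n → lpSeq p →L[ℝ] lpSeq p} (ha : ∀ k i j, 0 ≤ a k i j)
    (h : ∀ k, Represents p (a k) (T k)) :
    EMat.ofReal (matListProd (List.ofFn a)) =
      EMat.listProd (List.ofFn fun k => EMat.ofReal (a k)) := by
  induction n with
  | zero => exact EMat.ofReal_idMat
  | succ n ih =>
    rw [List.ofFn_succ, List.ofFn_succ, EMat.listProd, ← ih (fun k => ha k.succ) fun k => h k.succ]
    exact EMat.ofReal_matMul (ha 0)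
      (matListProd_nonneg (List.forall_mem_ofFn_iff.2 fun k => ha k.succ)) (h 0)
      (Represents.matListProd_ofFn (fun k => ha k.succ) fun k => h k.succ)

lemma Represents.cycMatProd {m : ℕ} {A : Fin m → ℕ → ℕ → ℝ}
    {T : Fin m → lpSeq p →L[ℝ] lpSeq p} (hA : ∀ k i j, 0 ≤ A k i j)
    (hT : ∀ k, Represents p (A k) (T k)) (t : Fin m) :
    Represents p (cycMatProd A t) (cycOpProd T t) :=
  matListProd_ofFn (fun k => hA (t + k)) fun k => hT (t + k)

lemma EMat.ofReal_cycMatProd {m : ℕ} {A : Fin m → ℕ → ℕ → ℝ}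
    {T : Fin m → lpSeq p →L[ℝ] lpSeq p} (hA : ∀ k i j, 0 ≤ A k i j)
    (hT : ∀ k, Represents p (A k) (T k)) (t : Fin m) :
    EMat.ofReal (cycMatProd A t) = EMat.listProd (List.ofFn fun k => EMat.ofReal (A (t + k))) :=
  EMat.ofReal_matListProd_ofFn (fun k => hA (t + k)) fun k => hT (t + k)

lemma Represents.pow {a : ℕ → ℕ → ℝ} {T : lpSeq p →L[ℝ] lpSeq p} (ha : ∀ i j, 0 ≤ a i j)
    (h : Represents p a T) (n : ℕ) : Represents p (matListProd (List.replicate n a)) (T ^ n) := by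
  simpa [List.ofFn_const, List.prod_replicate] using
    matListProd_ofFn (a := fun _ : Fin n => a) (T := fun _ => T) (fun _ => ha) fun _ => h

end MatListProd

lemma hadPow_nonneg {a : ℕ → ℕ → ℝ} (ha : ∀ i j, 0 ≤ a i j) (r : ℝ) (i j : ℕ) :
    0 ≤ hadPow a r i j :=
  Real.rpow_nonneg (ha i j) r

lemma hadProd_nonneg {m : ℕ} {A : Fin m → ℕ → ℕ → ℝ} (hA : ∀ k i j, 0 ≤ A k i j) (i j : ℕ) :
    0 ≤ hadProd A i j :=
  Finset.prod_nonneg fun k _ => hA k i j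

namespace EMat

lemma ofReal_hadPow {a : ℕ → ℕ → ℝ} (ha : ∀ i j, 0 ≤ a i j) {r : ℝ} (hr : 0 ≤ r) :
    ofReal (hadPow a r) = ofReal a ^ r :=
  funext₂ fun i j => (ENNReal.ofReal_rpow_of_nonneg (ha i j) hr).symm

lemma ofReal_hadPow_natCast {a : ℕ → ℕ → ℝ} (ha : ∀ i j, 0 ≤ a i j) (n : ℕ) :
    ofReal (hadPow a n) = ofReal a ^ n := by
  funext i j
  simp [ofReal, hadPow, ENNReal.ofReal_pow (ha i j)]

lemma ofReal_hadProd {m : ℕ} {A : Fin m → ℕ → ℕ → ℝ} (hA : ∀ k i j, 0 ≤ A k i j) :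
    ofReal (hadProd A) = ∏ k, ofReal (A k) := by
  funext i j
  simp only [ofReal, hadProd, Finset.prod_apply]
  exact ENNReal.ofReal_prod_of_nonneg fun k _ => hA k i j

end EMat

lemma lpSeq.summable_mul (f g : lpSeq 2) : Summable fun i => f i * g i := by
  simpa [mul_comm] using lp.summable_inner (𝕜 := ℝ) f g

lemma lpSeq.inner_eq_tsum (f g : lpSeq 2) : ⟪f, g⟫_ℝ = ∑' i, f i * g i := by
  simp [lp.inner_eq_tsum, mul_comm]

lemma numRadius_nonneg (T : lpSeq 2 →L[ℝ] lpSeq 2) : 0 ≤ numRadius T :=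
  Real.sSup_nonneg (by rintro r ⟨f, _, rfl⟩; exact abs_nonneg _)

lemma abs_inner_le_numRadius (T : lpSeq 2 →L[ℝ] lpSeq 2) {f : lpSeq 2} (hf : ‖f‖ = 1) :
    |⟪T f, f⟫_ℝ| ≤ numRadius T := by
  refine le_csSup ⟨‖T‖, ?_⟩ ⟨f, hf, rfl⟩
  rintro r ⟨g, hg, rfl⟩
  calc |⟪T g, g⟫_ℝ| ≤ ‖T g‖ * ‖g‖ := abs_real_inner_le_norm _ _
    _ ≤ ‖T‖ * ‖g‖ * ‖g‖ := by gcongr; exact T.le_opNorm g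
    _ = ‖T‖ := by rw [hg, mul_one, mul_one]

lemma numRadius_le {T : lpSeq 2 →L[ℝ] lpSeq 2} {r : ℝ} (hr : 0 ≤ r)
    (h : ∀ f : lpSeq 2, ‖f‖ = 1 → |⟪T f, f⟫_ℝ| ≤ r) : numRadius T ≤ r :=
  Real.sSup_le (by rintro s ⟨f, hf, rfl⟩; exact h f hf) hr

namespace Represents

variable {a b : ℕ → ℕ → ℝ} {Ta Tb : lpSeq 2 →L[ℝ] lpSeq 2}

lemma inner_nonneg (ha : ∀ i j, 0 ≤ a i j) (h : Represents 2 a Ta) {x : lpSeq 2}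
    (hx : ∀ j, 0 ≤ x j) : 0 ≤ ⟪Ta x, x⟫_ℝ := by
  rw [lpSeq.inner_eq_tsum]
  exact tsum_nonneg fun i => mul_nonneg (h.apply_nonneg ha hx i) (hx i)

lemma abs_inner_le (ha : ∀ i j, 0 ≤ a i j) (h : Represents 2 a Ta) (f : lpSeq 2) :
    |⟪Ta f, f⟫_ℝ| ≤ ⟪Ta (lpAbs f), lpAbs f⟫_ℝ := by
  rw [lpSeq.inner_eq_tsum, lpSeq.inner_eq_tsum, ← Real.norm_eq_abs]
  refine tsum_of_norm_bounded (lpSeq.summable_mul _ _).hasSum fun i => ?_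
  rw [norm_mul, Real.norm_eq_abs, Real.norm_eq_abs, lpAbs_apply]
  exact mul_le_mul_of_nonneg_right (h.abs_apply_le ha f i) (abs_nonneg _)

lemma inner_le_inner_of_le (hab : ∀ i j, a i j ≤ b i j) (hTa : Represents 2 a Ta)
    (hTb : Represents 2 b Tb) {x : lpSeq 2} (hx : ∀ j, 0 ≤ x j) : ⟪Ta x, x⟫_ℝ ≤ ⟪Tb x, x⟫_ℝ := by
  rw [lpSeq.inner_eq_tsum, lpSeq.inner_eq_tsum]
  refine (lpSeq.summable_mul _ _).tsum_le_tsum (fun i => ?_) (lpSeq.summable_mul _ _)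
  refine mul_le_mul_of_nonneg_right ?_ (hx i)
  exact hasSum_le (fun j => mul_le_mul_of_nonneg_right (hab i j) (hx j)) (hTa x i) (hTb x i)

lemma ofReal_inner (ha : ∀ i j, 0 ≤ a i j) (h : Represents 2 a Ta) {x : lpSeq 2}
    (hx : ∀ j, 0 ≤ x j) :
    ENNReal.ofReal ⟪Ta x, x⟫_ℝ = EMat.quadForm (EMat.ofReal a) fun j => ENNReal.ofReal (x j) := by
  rw [EMat.quadForm_eq_tsum_mulVec, h.mulVec_ofReal ha hx, lpSeq.inner_eq_tsum,
    ENNReal.ofReal_tsum_of_nonneg (fun i => mul_nonneg (h.apply_nonneg ha hx i) (hx i))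
      (lpSeq.summable_mul _ _)]
  exact tsum_congr fun i => ENNReal.ofReal_mul (h.apply_nonneg ha hx i)

end Represents

theorem numRadius_le_numRadius_of_le {a b : ℕ → ℕ → ℝ} {Ta Tb : lpSeq 2 →L[ℝ] lpSeq 2}
    (ha : ∀ i j, 0 ≤ a i j) (hab : ∀ i j, a i j ≤ b i j) (hTa : Represents 2 a Ta)
    (hTb : Represents 2 b Tb) : numRadius Ta ≤ numRadius Tb := by
  refine numRadius_le (numRadius_nonneg Tb) fun f hf => ?_
  calc |⟪Ta f, f⟫_ℝ| ≤ ⟪Ta (lpAbs f), lpAbs f⟫_ℝ := hTa.abs_inner_le ha f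
    _ ≤ ⟪Tb (lpAbs f), lpAbs f⟫_ℝ := hTa.inner_le_inner_of_le hab hTb fun j => abs_nonneg _
    _ ≤ numRadius Tb :=
      (le_abs_self _).trans (abs_inner_le_numRadius Tb (by rw [norm_lpAbs, hf]))

section HadamardGeomMean

variable {m : ℕ} [NeZero m] {P : Fin m → ℕ → ℕ → ℝ} {U : Fin m → lpSeq 2 →L[ℝ] lpSeq 2}
  {Q : lpSeq 2 →L[ℝ] lpSeq 2}

lemma inner_le_prod_inner_rpow (hP : ∀ t i j, 0 ≤ P t i j) (hU : ∀ t, Represents 2 (P t) (U t))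
    (hQ : Represents 2 (hadProd fun t => hadPow (P t) (1 / (m : ℝ))) Q) {x : lpSeq 2}
    (hx : ∀ j, 0 ≤ x j) : ⟪Q x, x⟫_ℝ ≤ ∏ t, ⟪U t x, x⟫_ℝ ^ (1 / (m : ℝ)) := by
  have hr : (0 : ℝ) ≤ 1 / m := by positivity
  have hQ0 := hadProd_nonneg fun t => hadPow_nonneg (hP t) (1 / (m : ℝ))
  have hU0 : ∀ t, 0 ≤ ⟪U t x, x⟫_ℝ := fun t => (hU t).inner_nonneg (hP t) hx
  rw [← ENNReal.ofReal_le_ofReal_iff (Finset.prod_nonneg fun t _ => Real.rpow_nonneg (hU0 t) _),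
    hQ.ofReal_inner hQ0 hx, EMat.ofReal_hadProd fun t => hadPow_nonneg (hP t) _,
    ENNReal.ofReal_prod_of_nonneg fun t _ => Real.rpow_nonneg (hU0 t) _]
  simp only [EMat.ofReal_hadPow (hP _) hr, ← ENNReal.ofReal_rpow_of_nonneg (hU0 _) hr,
    (hU _).ofReal_inner (hP _) hx]
  exact EMat.quadForm_prod_rpow_le _ _

theorem numRadius_hadProd_rpow_le (hP : ∀ t i j, 0 ≤ P t i j)
    (hU : ∀ t, Represents 2 (P t) (U t))
    (hQ : Represents 2 (hadProd fun t => hadPow (P t) (1 / (m : ℝ))) Q) :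
    numRadius Q ≤ (∏ t, numRadius (U t)) ^ (1 / (m : ℝ)) := by
  have hw := fun t => numRadius_nonneg (U t)
  refine numRadius_le (Real.rpow_nonneg (Finset.prod_nonneg fun t _ => hw t) _) fun f hf => ?_
  have hf' : ‖lpAbs f‖ = 1 := by rw [norm_lpAbs, hf]
  have hU0 : ∀ t, 0 ≤ ⟪U t (lpAbs f), lpAbs f⟫_ℝ := fun t =>
    (hU t).inner_nonneg (hP t) fun j => abs_nonneg _
  rw [← Real.finsetProd_rpow _ _ fun t _ => hw t]
  calc |⟪Q f, f⟫_ℝ| ≤ ⟪Q (lpAbs f), lpAbs f⟫_ℝ :=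
        hQ.abs_inner_le (hadProd_nonneg fun t => hadPow_nonneg (hP t) _) f
    _ ≤ ∏ t, ⟪U t (lpAbs f), lpAbs f⟫_ℝ ^ (1 / (m : ℝ)) :=
        inner_le_prod_inner_rpow hP hU hQ fun j => abs_nonneg _
    _ ≤ ∏ t, numRadius (U t) ^ (1 / (m : ℝ)) := by
        refine Finset.prod_le_prod (fun t _ => Real.rpow_nonneg (hU0 t) _) fun t _ =>
          Real.rpow_le_rpow (hU0 t) ?_ (by positivity)
        exact (le_abs_self _).trans (abs_inner_le_numRadius _ hf')

end HadamardGeomMean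

section Existence

variable {p : ℝ≥0∞} [Fact (1 ≤ p)]

lemma Represents.exists_hadPow {a : ℕ → ℕ → ℝ} {T : lpSeq p →L[ℝ] lpSeq p}
    (ha : ∀ i j, 0 ≤ a i j) (h : Represents p a T) {r : ℝ} (hr : 1 ≤ r) :
    ∃ S : lpSeq p →L[ℝ] lpSeq p, Represents p (hadPow a r) S := by
  refine Represents.exists_of_le (hadPow_nonneg ha r) (fun i j => ?_) (h.smul (‖T‖ ^ (r - 1)))
  calc a i j ^ r = a i j ^ (r - 1) * a i j := by
        rw [← Real.rpow_add_one' (ha i j) (by linarith), sub_add_cancel]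
    _ ≤ ‖T‖ ^ (r - 1) * a i j := mul_le_mul_of_nonneg_right (Real.rpow_le_rpow (ha i j)
        ((le_abs_self _).trans (h.abs_le_opNorm i j)) (by linarith)) (ha i j)

lemma exists_represents_hadProd {m : ℕ} [NeZero m] {A : Fin m → ℕ → ℕ → ℝ}
    {T : Fin m → lpSeq p →L[ℝ] lpSeq p} (hA : ∀ k i j, 0 ≤ A k i j)
    (hT : ∀ k, Represents p (A k) (T k)) :
    ∃ H : lpSeq p →L[ℝ] lpSeq p, Represents p (hadProd A) H := by
  refine Represents.exists_of_le (hadProd_nonneg hA) (fun i j => ?_)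
    ((hT 0).smul (∏ k ∈ Finset.univ.erase 0, ‖T k‖))
  rw [hadProd, ← Finset.mul_prod_erase _ _ (Finset.mem_univ 0), mul_comm]
  gcongr with k hk
  · exact hA 0 i j
  · exact fun k _ => hA k i j
  · exact (le_abs_self _).trans ((hT k).abs_le_opNorm i j)

/-- The geometric mean is dominated by the arithmetic mean. -/
lemma exists_represents_hadProd_hadPow_inv {m : ℕ} [NeZero m] {P : Fin m → ℕ → ℕ → ℝ}
    {U : Fin m → lpSeq p →L[ℝ] lpSeq p} (hP : ∀ t i j, 0 ≤ P t i j)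
    (hU : ∀ t, Represents p (P t) (U t)) :
    ∃ Q : lpSeq p →L[ℝ] lpSeq p,
      Represents p (hadProd fun t => hadPow (P t) (1 / (m : ℝ))) Q :=
  Represents.exists_of_le (hadProd_nonneg fun t => hadPow_nonneg (hP t) _)
    (fun i j => Real.geom_mean_le_arith_mean_weighted _ _ (fun t => P t i j)
      (fun _ _ => by positivity) (by simp) fun t _ => hP t i j)
    (Represents.finset_sum Finset.univ fun t _ => (hU t).smul (1 / (m : ℝ)))

end Existence

section CyclicProducts

variable {p : ℝ≥0∞} [Fact (1 ≤ p)] {m : ℕ} {A : Fin m → ℕ → ℕ → ℝ}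
  {S T : Fin m → lpSeq p →L[ℝ] lpSeq p}

lemma cycMatProd_hadPow_le (hm : 0 < m) (hA : ∀ k i j, 0 ≤ A k i j)
    (hT : ∀ k, Represents p (A k) (T k)) (hS : ∀ k, Represents p (hadPow (A k) m) (S k))
    (t : Fin m) (i j : ℕ) :
    cycMatProd (fun k => hadPow (A k) m) t i j ≤ hadPow (cycMatProd A t) m i j := by
  have hAm := fun k => hadPow_nonneg (hA k) m
  rw [← ENNReal.ofReal_le_ofReal_iff (hadPow_nonneg (cycMatProd_nonneg hA t) _ i j)]
  change EMat.ofReal _ i j ≤ EMat.ofReal _ i j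
  rw [EMat.ofReal_cycMatProd hAm hS, EMat.ofReal_hadPow_natCast (cycMatProd_nonneg hA t),
    EMat.ofReal_cycMatProd hA hT]
  simp only [EMat.ofReal_hadPow_natCast (hA _)]
  have h := EMat.listProd_map_pow_le hm (List.ofFn fun k => EMat.ofReal (A (t + k)))
  rw [List.map_ofFn, Function.comp_def] at h
  exact h i j

lemma matListProd_replicate_hadProd_le [NeZero m] {H : lpSeq p →L[ℝ] lpSeq p}
    (hA : ∀ k i j, 0 ≤ A k i j) (hH : Represents p (hadProd A) H)
    (hS : ∀ k, Represents p (hadPow (A k) m) (S k)) (i j : ℕ) :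
    matListProd (List.replicate m (hadProd A)) i j ≤
      hadProd (fun t => hadPow (cycMatProd (fun k => hadPow (A k) m) t) (1 / (m : ℝ))) i j := by
  have hAm := fun k => hadPow_nonneg (hA k) m
  have hcyc := fun t => hadPow_nonneg (cycMatProd_nonneg hAm t) (1 / (m : ℝ))
  rw [← ENNReal.ofReal_le_ofReal_iff (hadProd_nonneg hcyc i j)]
  change EMat.ofReal _ i j ≤ EMat.ofReal _ i j
  rw [← List.ofFn_const, EMat.ofReal_matListProd_ofFn (fun _ => hadProd_nonneg hA) fun _ => hH,
    List.ofFn_const, EMat.ofReal_hadProd hA, EMat.ofReal_hadProd hcyc]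
  simp only [EMat.ofReal_hadPow (cycMatProd_nonneg hAm _) (by positivity : (0 : ℝ) ≤ 1 / m),
    EMat.ofReal_cycMatProd hAm hS, EMat.ofReal_hadPow_natCast (hA _)]
  simpa only [EMat.cycPowProd_self] using
    EMat.listProd_replicate_prod_le (fun k => EMat.ofReal (A k)) m i j

end CyclicProducts

/-- numerical radius version on `ℓ²` with `t = m`: for the cyclic products
`P_i = A_i^{(m)} ⋯ A_m^{(m)} A_1^{(m)} ⋯ A_{i-1}^{(m)}`,
`w((A₁∘⋯∘A_m)^m) ≤ w(P₁^{(1/m)}∘⋯∘P_m^{(1/m)}) ≤ (w(P₁)⋯w(P_m))^{1/m}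
  ≤ (w((A₁A₂⋯A_m)^{(m)}) w((A₂⋯A_mA₁)^{(m)}) ⋯ w((A_mA₁⋯A_{m-1})^{(m)}))^{1/m}`. -/
theorem numRadius_hadamard_pow_le_cyclic_chain
    (m : ℕ) (hm : 0 < m)
    (A : Fin m → ℕ → ℕ → ℝ) (hA : ∀ k i j, 0 ≤ A k i j)
    (T : Fin m → lpSeq 2 →L[ℝ] lpSeq 2) (hT : ∀ k, Represents 2 (A k) (T k)) :
    ∃ (H Q : lpSeq 2 →L[ℝ] lpSeq 2) (S V : Fin m → lpSeq 2 →L[ℝ] lpSeq 2),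
      Represents 2 (hadProd A) H ∧
      Represents 2
        (hadProd fun i =>
          hadPow (cycMatProd (fun k => hadPow (A k) (m : ℝ)) i) (1 / (m : ℝ))) Q ∧
      (∀ k, Represents 2 (hadPow (A k) (m : ℝ)) (S k)) ∧
      (∀ i, Represents 2 (hadPow (cycMatProd A i) (m : ℝ)) (V i)) ∧
      numRadius (H ^ m) ≤ numRadius Q ∧
      numRadius Q ≤ (∏ i, numRadius (cycOpProd S i)) ^ (1 / (m : ℝ)) ∧
      (∏ i, numRadius (cycOpProd S i)) ^ (1 / (m : ℝ)) ≤
        (∏ i, numRadius (V i)) ^ (1 / (m : ℝ)) := by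
  have : NeZero m := ⟨hm.ne'⟩
  have hm1 : (1 : ℝ) ≤ m := by exact_mod_cast hm
  have hAm := fun k => hadPow_nonneg (hA k) m
  choose S hS using fun k => (hT k).exists_hadPow (hA k) hm1
  choose V hV using fun t =>
    (Represents.cycMatProd hA hT t).exists_hadPow (cycMatProd_nonneg hA t) hm1
  obtain ⟨H, hH⟩ := exists_represents_hadProd hA hT
  have hSc := Represents.cycMatProd hAm hS
  obtain ⟨Q, hQ⟩ := exists_represents_hadProd_hadPow_inv (cycMatProd_nonneg hAm) hSc
  have hHm : ∀ i j, 0 ≤ matListProd (List.replicate m (hadProd A)) i j :=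
    matListProd_nonneg fun _ hb => List.eq_of_mem_replicate hb ▸ hadProd_nonneg hA
  refine ⟨H, Q, S, V, hH, hQ, hS, hV, ?_,
    numRadius_hadProd_rpow_le (cycMatProd_nonneg hAm) hSc hQ, ?_⟩
  · exact numRadius_le_numRadius_of_le hHm (matListProd_replicate_hadProd_le hA hH hS)
      (hH.pow (hadProd_nonneg hA) m) hQ
  · refine Real.rpow_le_rpow (Finset.prod_nonneg fun t _ => numRadius_nonneg _)
      (Finset.prod_le_prod (fun t _ => numRadius_nonneg _) fun t _ => ?_) (by positivity)
    exact numRadius_le_numRadius_of_le (cycMatProd_nonneg hAm t)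
      (cycMatProd_hadPow_le hm hA hT hS t) (hSc t) (hV t)
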